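/- arXiv:2603.08440 — 4 statements merged into one kernel-verified Lean document; each statement's English description precedes it below -/
import Mathlib

section
/- Let E be a real Banach space and A, B : E → E. Let Φ : ℝ → E → E satisfy: (i) Φ(0) = id; (ii) the group property Φ(s+t)(x) = Φ(s)(Φ(t)(x)) for all s, t ∈ ℝ and x ∈ E; (iii) the map (τ, x) ↦ Φ(τ)(x) is continuously differentiable with ∂_τ Φ(τ)(x) = A(Φ(τ)(x)) for all τ, x; (iv) each Φ(t) is affine, i.e. there exist a continuous linear map T(t) : E → E and a vector c(t) ∈ E with Φ(t)(x) = T(t)(x) + c(t) for all x. Let t > 0 and let v : [0, t] → E be differentiable with v'(s) = A(v(s)) + B(v(s)) for all s ∈ [0, t], and assume s ↦ T(t−s)(B(v(s))) is continuous on [0, t]. Then v(t) = Φ(t)(v(0)) + ∫₀ᵗ T(t−s)(B(v(s))) ds. -/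
/-!
Differentiate `g s = Φ (t - s) (v s)`. By the chain rule,
`g' s = T (t - s) (v' s) - A (Φ (t - s) (v s))`. Differentiating the group law
`Φ (τ + σ) x = Φ τ (Φ σ x)` at `σ = 0` shows that the flow intertwines the vector field with
the linear part, `A (Φ τ x) = T τ (A x)`; hence the `A`-terms cancel and
`g' s = T (t - s) (B (v s))`, and the fundamental theorem of calculus gives
`v t - Φ t (v 0) = g t - g 0 = ∫₀ᵗ T (t - s) (B (v s)) ds`.
-/

open intervalIntegral Set

theorem hasFDerivAt_of_eq_add_const {𝕜 E F : Type*} [NontriviallyNormedField 𝕜]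
    [NormedAddCommGroup E] [NormedSpace 𝕜 E] [NormedAddCommGroup F] [NormedSpace 𝕜 F]
    {f : E → F} {L : E →L[𝕜] F} {c : F} (hf : ∀ x, f x = L x + c) (x : E) :
    HasFDerivAt f L x := by
  rw [show f = fun x => L x + c from funext hf]
  exact L.hasFDerivAt.add_const c

theorem vectorField_flow_eq_of_hasFDerivAt {E : Type*} [NormedAddCommGroup E]
    [NormedSpace ℝ E] {A : E → E} {Φ : ℝ → E → E} {L : E →L[ℝ] E} {τ : ℝ} {x : E}
    (h0 : Φ 0 x = x) (hgrp : ∀ σ, Φ (τ + σ) x = Φ τ (Φ σ x))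
    (hflow : ∀ σ, HasDerivAt (fun σ' => Φ σ' x) (A (Φ σ x)) σ) (hL : HasFDerivAt (Φ τ) L x) :
    A (Φ τ x) = L (A x) := by
  have h_shift : HasDerivAt (fun σ => Φ (τ + σ) x) (A (Φ τ x)) 0 :=
    HasDerivAt.comp_const_add τ 0 (by simpa using hflow τ)
  have h_comp : HasDerivAt (fun σ => Φ τ (Φ σ x)) (L (A x)) 0 := by
    have h_inner := hflow 0
    rw [h0] at h_inner
    exact hL.comp_hasDerivAt_of_eq 0 h_inner h0.symm
  simp only [hgrp] at h_shift
  exact h_shift.unique h_comp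

theorem HasFDerivAt.apply_prod_eq_of_partials {𝕜 E F : Type*} [NontriviallyNormedField 𝕜]
    [NormedAddCommGroup E] [NormedSpace 𝕜 E] [NormedAddCommGroup F] [NormedSpace 𝕜 F]
    {f : 𝕜 → E → F} {D : 𝕜 × E →L[𝕜] F} {τ : 𝕜} {x : E} {a : F} {L : E →L[𝕜] F}
    (hD : HasFDerivAt (fun p : 𝕜 × E => f p.1 p.2) D (τ, x))
    (h_time : HasDerivAt (fun σ => f σ x) a τ) (h_space : HasFDerivAt (f τ) L x)
    (r : 𝕜) (w : E) : D (r, w) = r • a + L w := by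
  have h_fst : D (1, 0) = a := by
    have h := hD.comp_hasDerivAt τ ((hasDerivAt_id τ).prodMk (hasDerivAt_const τ x))
    exact h.unique h_time
  have h_snd : D.comp (ContinuousLinearMap.inr 𝕜 𝕜 E) = L :=
    (hD.comp x (hasFDerivAt_prodMk_right τ x)).unique h_space
  have h_split : ((r, w) : 𝕜 × E) = r • ((1 : 𝕜), (0 : E)) + ((0 : 𝕜), w) := by simp
  rw [h_split, map_add, map_smul, h_fst, ← h_snd]
  rfl

theorem hasDerivAt_sub_comp_apply {E F : Type*} [NormedAddCommGroup E] [NormedSpace ℝ E]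
    [NormedAddCommGroup F] [NormedSpace ℝ F] {f : ℝ → E → F} {v : ℝ → E} {a : F} {v' : E}
    {L : E →L[ℝ] F} {t s : ℝ}
    (hf : DifferentiableAt ℝ (fun p : ℝ × E => f p.1 p.2) (t - s, v s))
    (h_time : HasDerivAt (fun σ => f σ (v s)) a (t - s))
    (h_space : HasFDerivAt (f (t - s)) L (v s)) (hv : HasDerivAt v v' s) :
    HasDerivAt (fun s => f (t - s) (v s)) (L v' - a) s := by
  have h_curve : HasDerivAt (fun s => (t - s, v s)) ((-1 : ℝ), v') s :=
    ((hasDerivAt_id s).const_sub t).prodMk hv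
  have h := hf.hasFDerivAt.comp_hasDerivAt s h_curve
  rwa [hf.hasFDerivAt.apply_prod_eq_of_partials h_time h_space, neg_one_smul,
    neg_add_eq_sub] at h

/-- Abstract Duhamel formula for a splitting with an affine linear part: if `Φ` is
a group flow of the vector field `A`, each `Φ t` being affine with linear part
`T t`, and `v` solves `v' = A(v) + B(v)` on `[0,t]`, then
`v(t) = Φ(t)(v(0)) + ∫₀ᵗ T(t−s)(B(v(s))) ds`. -/
theorem duhamel_affine
    {E : Type*} [NormedAddCommGroup E] [NormedSpace ℝ E] [CompleteSpace E]
    (A B : E → E) (Φ : ℝ → E → E) (T : ℝ → E →L[ℝ] E) (c : ℝ → E)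
    (h0 : ∀ x : E, Φ 0 x = x)
    (hgrp : ∀ s t : ℝ, ∀ x : E, Φ (s + t) x = Φ s (Φ t x))
    (hC1 : ContDiff ℝ 1 (fun p : ℝ × E => Φ p.1 p.2))
    (hflow : ∀ (τ : ℝ) (x : E), HasDerivAt (fun σ => Φ σ x) (A (Φ τ x)) τ)
    (haff : ∀ (t : ℝ) (x : E), Φ t x = T t x + c t)
    (t : ℝ) (ht : 0 < t) (v : ℝ → E)
    (hv : ∀ s ∈ Set.Icc (0 : ℝ) t, HasDerivAt v (A (v s) + B (v s)) s)
    (hcont : ContinuousOn (fun s : ℝ => T (t - s) (B (v s))) (Set.Icc 0 t)) :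
    v t = Φ t (v 0) + ∫ s in (0 : ℝ)..t, T (t - s) (B (v s)) := by
  have hT : ∀ τ x, HasFDerivAt (Φ τ) (T τ) x := fun τ => hasFDerivAt_of_eq_add_const (haff τ)
  have h_intertwine : ∀ τ x, A (Φ τ x) = T τ (A x) := fun τ x =>
    vectorField_flow_eq_of_hasFDerivAt (h0 x) (hgrp τ · x) (hflow · x) (hT τ x)
  have h_deriv : ∀ s ∈ uIcc 0 t,
      HasDerivAt (fun s => Φ (t - s) (v s)) (T (t - s) (B (v s))) s := by
    intro s hs
    rw [uIcc_of_le ht.le] at hs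
    have h := hasDerivAt_sub_comp_apply (hC1.differentiable one_ne_zero (t - s, v s))
      (hflow (t - s) (v s)) (hT (t - s) (v s)) (hv s hs)
    rwa [h_intertwine, map_add, add_sub_cancel_left] at h
  have h_int : IntervalIntegrable (fun s => T (t - s) (B (v s))) MeasureTheory.volume 0 t :=
    (uIcc_of_le ht.le ▸ hcont).intervalIntegrable
  rw [integral_eq_sub_of_hasDerivAt h_deriv h_int, sub_self, sub_zero, h0]
  abel
end

section
/- Let E be a real Banach space, L : E → E a continuous linear map, c ∈ E, and let A : E → E be the affine map A(x) = L(x) + c. Let T : ℝ → (continuous linear maps E → E) satisfy: for every x ∈ E the map s ↦ T(s)(x) is differentiable with derivative L(T(s)(x)), and T(s) ∘ L = L ∘ T(s) for all s. Let Φ : ℝ → E → E be a flow of A of the form Φ(s)(x) = T(s)(x) + γ(s), satisfying ∂_s Φ(s)(x) = A(Φ(s)(x)) for all s and x. Let B : E → E be continuously differentiable, let v₀ ∈ E, τ ∈ ℝ, and set f(s) := T(τ−s)(B(Φ(s)(v₀))). Then f is differentiable and, for all s, f'(s) = T(τ−s)( [B,A](Φ(s)(v₀)) ), where [B,A](u)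 := B'(u)[A(u)] − L(B(u)) (i.e. B'(u)[A(u)] − A'(u)[B(u)], since A'(u) = L). -/
/-!
Write `u(σ) = B(Φ(σ)(v₀))`, so that `u' = B'(Φ)[A(Φ)]` by the chain rule along the flow, and
`f(σ) = T(τ-σ)(u(σ))`. The product rule for `σ ↦ T(τ-σ)` applied to the moving vector `u(σ)` holds
although `T` is only strongly differentiable: by Banach–Steinhaus `‖T(τ-σ)‖` stays bounded near
`s`, which is enough to control `T(τ-σ)(u(σ) - u(s))`. The derivative of `T(τ-σ)(u(s))` is
`-L(T(τ-s)(u(s))) = -T(τ-s)(L(u(s)))` since `T` commutes with `L`.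
-/

open Filter Topology Asymptotics

namespace ContinuousLinearMap

variable {𝕜 E F : Type*} [NontriviallyNormedField 𝕜] [NormedAddCommGroup E] [NormedSpace 𝕜 E]
  [NormedAddCommGroup F] [NormedSpace 𝕜 F] [CompleteSpace E]

theorem isBoundedUnder_norm_of_tendsto_apply {α : Type*} {l : Filter α} [l.IsCountablyGenerated]
    {S : α → E →L[𝕜] F} {g : E → F} (h : ∀ x, Tendsto (fun a ↦ S a x) l (𝓝 (g x))) :
    IsBoundedUnder (· ≤ ·) l fun a ↦ ‖S a‖ := by
  by_contra hunb
  obtain ⟨V, hV⟩ := l.exists_antitone_basis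
  have hfreq : ∀ n : ℕ, ∃ a ∈ V n, (n : ℝ) < ‖S a‖ := by
    intro n
    by_contra! hle
    exact hunb ⟨n, eventually_map.2 (mem_of_superset (hV.mem n) hle)⟩
  choose a haV ha using hfreq
  have ha_tendsto : Tendsto a atTop l := hV.tendsto haV
  obtain ⟨C, hC⟩ : ∃ C, ∀ n, ‖S (a n)‖ ≤ C := by
    refine banach_steinhaus fun x ↦ ?_
    obtain ⟨C, hC⟩ := isBounded_iff_forall_norm_le.1
      (Metric.isBounded_range_of_tendsto _ ((h x).comp ha_tendsto))
    exact ⟨C, fun n ↦ hC _ ⟨n, rfl⟩⟩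
  obtain ⟨n, hn⟩ := exists_nat_gt C
  linarith [ha n, hC n]

theorem hasDerivAt_apply_sub_of_continuousAt_apply {S : 𝕜 → E →L[𝕜] F} {u : 𝕜 → E} {d : E}
    {s : 𝕜} (hS : ∀ x, ContinuousAt (fun σ ↦ S σ x) s) (hu : HasDerivAt u d s) :
    HasDerivAt (fun σ ↦ S σ (u σ - u s)) (S s d) s := by
  obtain ⟨C, hC⟩ := isBoundedUnder_norm_of_tendsto_apply hS
  rw [hasDerivAt_iff_isLittleO] at hu ⊢
  have hsplit : (fun σ ↦ S σ (u σ - u s) - S s (u s - u s) - (σ - s) • S s d)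
      = (fun σ ↦ S σ (u σ - u s - (σ - s) • d)) + fun σ ↦ (σ - s) • (S σ d - S s d) := by
    funext σ
    simp only [sub_self, map_zero, map_sub, map_smul, smul_sub, Pi.add_apply]
    abel
  rw [hsplit]
  refine IsLittleO.add ?_ ?_
  · refine IsBigO.trans_isLittleO (IsBigO.of_bound C ?_) hu
    filter_upwards [eventually_map.1 hC] with σ hσ
    exact (S σ).le_of_opNorm_le hσ _
  · have hSd : (fun σ ↦ S σ d - S s d) =o[𝓝 s] fun _ ↦ (1 : 𝕜) :=
      (isLittleO_one_iff 𝕜).2 (tendsto_sub_nhds_zero_iff.2 (hS d))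
    simpa using (isBigO_refl (fun σ ↦ σ - s) (𝓝 s)).smul_isLittleO hSd

theorem hasDerivAt_apply_of_continuousAt_apply {S : 𝕜 → E →L[𝕜] F} {u : 𝕜 → E} {d : E}
    {w : F} {s : 𝕜} (hS : ∀ x, ContinuousAt (fun σ ↦ S σ x) s)
    (hSu : HasDerivAt (fun σ ↦ S σ (u s)) w s) (hu : HasDerivAt u d s) :
    HasDerivAt (fun σ ↦ S σ (u σ)) (w + S s d) s := by
  convert hSu.add (hasDerivAt_apply_sub_of_continuousAt_apply hS hu) using 1
  funext σ
  rw [Pi.add_apply, ← map_add, add_sub_cancel]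

end ContinuousLinearMap

theorem lie_splitting_quadrature_derivative_general
    {E : Type*} [NormedAddCommGroup E] [NormedSpace ℝ E] [CompleteSpace E]
    (L : E →L[ℝ] E) (A : E → E)
    (T : ℝ → E →L[ℝ] E)
    (hT : ∀ (x : E) (s : ℝ), HasDerivAt (fun σ : ℝ => T σ x) (L (T s x)) s)
    (hTL : ∀ (s : ℝ) (x : E), T s (L x) = L (T s x))
    (Φ : ℝ → E → E)
    (hflow : ∀ (s : ℝ) (x : E), HasDerivAt (fun σ : ℝ => Φ σ x) (A (Φ s x)) s)
    (B : E → E) (hB : ContDiff ℝ 1 B) (v₀ : E) (τ : ℝ)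
    (f : ℝ → E) (hf : ∀ s : ℝ, f s = T (τ - s) (B (Φ s v₀))) :
    ∀ s : ℝ, HasDerivAt f
      (T (τ - s) (fderiv ℝ B (Φ s v₀) (A (Φ s v₀)) - L (B (Φ s v₀)))) s := by
  intro s
  have hu : HasDerivAt (fun σ ↦ B (Φ σ v₀)) (fderiv ℝ B (Φ s v₀) (A (Φ s v₀))) s :=
    ((hB.differentiable one_ne_zero _).hasFDerivAt).comp_hasDerivAt s (hflow s v₀)
  have hT_cont : ∀ x, ContinuousAt (fun σ ↦ T (τ - σ) x) s := fun x ↦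
    (hT x (τ - s)).continuousAt.comp (continuous_sub_left τ).continuousAt
  have hT_rev : ∀ x, HasDerivAt (fun σ ↦ T (τ - σ) x) (-T (τ - s) (L x)) s := fun x ↦ by
    simpa [Function.comp_def, hTL] using (hT x (τ - s)).scomp s ((hasDerivAt_id s).const_sub τ)
  rw [funext hf, map_sub, sub_eq_neg_add]
  exact ContinuousLinearMap.hasDerivAt_apply_of_continuousAt_apply hT_cont (hT_rev _) hu

/-- First derivative of the quadrature-error function in the local error analysis
of the Lie splitting: with `A(x) = L(x) + c` affine, `T` the semigroup of `L`,
`Φ` the affine flow of `A`, and `B` continuously differentiable,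
the function `f(s) = T(τ−s)(B(Φ(s)(v₀)))` satisfies
`f'(s) = T(τ−s)([B,A](Φ(s)(v₀)))` where `[B,A](u) = B'(u)[A(u)] − L(B(u))`. -/
theorem lie_splitting_quadrature_derivative
    {E : Type*} [NormedAddCommGroup E] [NormedSpace ℝ E] [CompleteSpace E]
    (L : E →L[ℝ] E) (c : E) (A : E → E) (hA : ∀ x : E, A x = L x + c)
    (T : ℝ → E →L[ℝ] E)
    (hT : ∀ (x : E) (s : ℝ), HasDerivAt (fun σ : ℝ => T σ x) (L (T s x)) s)
    (hTL : ∀ (s : ℝ) (x : E), T s (L x) = L (T s x))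
    (Φ : ℝ → E → E) (γ : ℝ → E)
    (hΦ : ∀ (s : ℝ) (x : E), Φ s x = T s x + γ s)
    (hflow : ∀ (s : ℝ) (x : E), HasDerivAt (fun σ : ℝ => Φ σ x) (A (Φ s x)) s)
    (B : E → E) (hB : ContDiff ℝ 1 B) (v₀ : E) (τ : ℝ)
    (f : ℝ → E) (hf : ∀ s : ℝ, f s = T (τ - s) (B (Φ s v₀))) :
    ∀ s : ℝ, HasDerivAt f
      (T (τ - s) (fderiv ℝ B (Φ s v₀) (A (Φ s v₀)) - L (B (Φ s v₀)))) s :=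
  lie_splitting_quadrature_derivative_general L A T hT hTL Φ hflow B hB v₀ τ f hf
end

section
/- Let E be a real Banach space, L : E → E a continuous linear map, c ∈ E, and let A : E → E be the affine map A(x) = L(x) + c. Let T : ℝ → (continuous linear maps E → E) satisfy: for every x ∈ E the map s ↦ T(s)(x) is differentiable with derivative L(T(s)(x)), and T(s) ∘ L = L ∘ T(s) for all s. Let Φ : ℝ → E → E be a flow of A of the form Φ(s)(x) = T(s)(x) + γ(s), satisfying ∂_s Φ(s)(x) = A(Φ(s)(x)) for all s and x. Let B : E → E be twice continuously differentiable, let v₀ ∈ E, τ ∈ ℝ, and set f(s) := T(τ−s)(B(Φ(s)(v₀))). Then f is twice differentiable and, for all s, f''(s) = T(τ−s)( [[B,A],A](Φ(s)(v₀)) ), where [B,A](u) := B'(u)[A(u)] − L(B(u)) and [[B,A],A](u) := ([B,A])'(u)[A(u)] − L([B,A](u)). -/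
/-! For a differentiable curve `h`, `d/ds T(τ - s)(h s) = T(τ - s)(h' s - L (h s))`: the product
rule holds because `T` is strongly differentiable and, by Banach–Steinhaus, locally bounded in
operator norm. Applied to `h = B ∘ Φ(·) v₀` it gives `f' = T(τ - s)([B,A](Φ s v₀))`, since
`Φ(·) v₀` has velocity `A`; applied once more, to `h = [B,A] ∘ Φ(·) v₀`, it gives `f''`. -/

open Filter Topology

section StronglyContinuous

variable {𝕜 E F : Type*} [NontriviallyNormedField 𝕜] [NormedAddCommGroup E] [NormedSpace 𝕜 E]
  [NormedAddCommGroup F] [NormedSpace 𝕜 F]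

theorem ContinuousLinearMap.exists_eventually_norm_le_of_continuous_apply
    {X : Type*} [TopologicalSpace X] [WeaklyLocallyCompactSpace X] [CompleteSpace E]
    {T : X → E →L[𝕜] F} (hT : ∀ x, Continuous fun σ => T σ x) (t : X) :
    ∃ M, ∀ᶠ σ in 𝓝 t, ‖T σ‖ ≤ M := by
  obtain ⟨K, hK, hKt⟩ := exists_compact_mem_nhds t
  obtain ⟨M, hM⟩ := banach_steinhaus (g := fun σ : K => T σ) fun x => by
    obtain ⟨C, hC⟩ := hK.exists_bound_of_continuousOn (hT x).continuousOn
    exact ⟨C, fun σ => hC σ σ.2⟩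
  exact ⟨M, Filter.mem_of_superset hKt fun σ hσ => hM ⟨σ, hσ⟩⟩

theorem Filter.Tendsto.clm_apply_of_eventually_norm_le {α : Type*} {l : Filter α}
    {T : α → E →L[𝕜] F} {y : α → E} {y₀ : E} {z : F} {M : ℝ}
    (hy : Tendsto y l (𝓝 y₀)) (hM : ∀ᶠ a in l, ‖T a‖ ≤ M)
    (hT : Tendsto (fun a => T a y₀) l (𝓝 z)) :
    Tendsto (fun a => T a (y a)) l (𝓝 z) := by
  have hsmall : Tendsto (fun a => T a (y a - y₀)) l (𝓝 0) := by
    refine squeeze_zero_norm' ?_ (by simpa using (tendsto_sub_nhds_zero_iff.2 hy).norm.const_mul M)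
    filter_upwards [hM] with a ha
    exact (T a).le_of_opNorm_le ha _
  simpa using hsmall.add hT

theorem HasDerivAt.clm_apply_of_eventually_norm_le {T : 𝕜 → E →L[𝕜] F} {h : 𝕜 → E}
    {h' : E} {d : F} {t : 𝕜} {M : ℝ} (hh : HasDerivAt h h' t) (hM : ∀ᶠ σ in 𝓝 t, ‖T σ‖ ≤ M)
    (hTh' : ContinuousAt (fun σ => T σ h') t) (hTd : HasDerivAt (fun σ => T σ (h t)) d t) :
    HasDerivAt (fun σ => T σ (h σ)) (T t h' + d) t := by
  rw [hasDerivAt_iff_tendsto_slope] at hTd hh ⊢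
  have hslope : slope (fun σ => T σ (h σ)) t =
      fun σ => T σ (slope h t σ) + slope (fun σ => T σ (h t)) t σ := by
    funext σ
    simp only [slope_def_module, map_smul, map_sub]
    rw [← smul_add]
    abel_nf
  rw [hslope]
  exact (hh.clm_apply_of_eventually_norm_le (nhdsWithin_le_nhds hM)
    (hTh'.tendsto.mono_left nhdsWithin_le_nhds)).add hTd

end StronglyContinuous

theorem hasDerivAt_semigroup_sub_apply {E : Type*} [NormedAddCommGroup E] [NormedSpace ℝ E]
    [CompleteSpace E] {L : E →L[ℝ] E} {T : ℝ → E →L[ℝ] E}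
    (hT : ∀ (x : E) (s : ℝ), HasDerivAt (fun σ : ℝ => T σ x) (L (T s x)) s)
    (hTL : ∀ (s : ℝ) (x : E), T s (L x) = L (T s x)) (τ : ℝ) {h : ℝ → E} {h' : E} {s : ℝ}
    (hh : HasDerivAt h h' s) :
    HasDerivAt (fun σ => T (τ - σ) (h σ)) (T (τ - s) (h' - L (h s))) s := by
  have hT' (x : E) (σ : ℝ) : HasDerivAt (fun σ => T (τ - σ) x) (-L (T (τ - σ) x)) σ := by
    simpa [Function.comp_def] using (hT x (τ - σ)).scomp σ ((hasDerivAt_id σ).const_sub τ)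
  have hcont (x : E) : Continuous fun σ => T (τ - σ) x :=
    continuous_iff_continuousAt.2 fun σ => (hT' x σ).continuousAt
  obtain ⟨M, hM⟩ := ContinuousLinearMap.exists_eventually_norm_le_of_continuous_apply hcont s
  rw [map_sub, hTL, sub_eq_add_neg]
  exact hh.clm_apply_of_eventually_norm_le hM (hcont h').continuousAt (hT' (h s) s)

theorem strang_splitting_quadrature_second_derivative_general
    {E : Type*} [NormedAddCommGroup E] [NormedSpace ℝ E] [CompleteSpace E]
    (L : E →L[ℝ] E) (c : E) (A : E → E) (hA : ∀ x : E, A x = L x + c)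
    (T : ℝ → E →L[ℝ] E)
    (hT : ∀ (x : E) (s : ℝ), HasDerivAt (fun σ : ℝ => T σ x) (L (T s x)) s)
    (hTL : ∀ (s : ℝ) (x : E), T s (L x) = L (T s x))
    (Φ : ℝ → E → E)
    (hflow : ∀ (s : ℝ) (x : E), HasDerivAt (fun σ : ℝ => Φ σ x) (A (Φ s x)) s)
    (B : E → E) (hB : ContDiff ℝ 2 B) (v₀ : E) (τ : ℝ)
    (f : ℝ → E) (hf : ∀ s : ℝ, f s = T (τ - s) (B (Φ s v₀)))
    (comm : E → E) (hcomm : ∀ u : E, comm u = fderiv ℝ B u (A u) - L (B u)) :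
    (∀ s : ℝ, DifferentiableAt ℝ f s) ∧
      ∀ s : ℝ, HasDerivAt (deriv f)
        (T (τ - s) (fderiv ℝ comm (Φ s v₀) (A (Φ s v₀)) - L (comm (Φ s v₀)))) s := by
  have transport (g : E → E) (hg : Differentiable ℝ g) (s : ℝ) :
      HasDerivAt (fun σ => T (τ - σ) (g (Φ σ v₀)))
        (T (τ - s) (fderiv ℝ g (Φ s v₀) (A (Φ s v₀)) - L (g (Φ s v₀)))) s :=
    hasDerivAt_semigroup_sub_apply hT hTL τ ((hg _).hasFDerivAt.comp_hasDerivAt s (hflow s v₀))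
  have hA_smooth : ContDiff ℝ 1 A := by
    rw [funext hA]
    exact L.contDiff.add contDiff_const
  have hcomm_smooth : ContDiff ℝ 1 comm := by
    rw [funext hcomm]
    exact ((hB.fderiv_right le_rfl).clm_apply hA_smooth).sub (L.contDiff.comp (hB.of_le one_le_two))
  have hf' (s : ℝ) : HasDerivAt f (T (τ - s) (comm (Φ s v₀))) s := by
    simpa only [← funext hf, ← hcomm] using transport B (hB.differentiable two_ne_zero) s
  refine ⟨fun s => (hf' s).differentiableAt, fun s => ?_⟩
  rw [funext fun s => (hf' s).deriv]
  exact transport comm (hcomm_smooth.differentiable one_ne_zero) s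

/-- Second derivative of the quadrature-error function in the local error analysis
of the Strang splitting: with `A(x) = L(x) + c` affine, `T` the semigroup of `L`,
`Φ` the affine flow of `A`, and `B` twice continuously differentiable, the function
`f(s) = T(τ−s)(B(Φ(s)(v₀)))` is twice differentiable with
`f''(s) = T(τ−s)([[B,A],A](Φ(s)(v₀)))`, where `[B,A](u) = B'(u)[A(u)] − L(B(u))`
and `[[B,A],A](u) = ([B,A])'(u)[A(u)] − L([B,A](u))`. -/
theorem strang_splitting_quadrature_second_derivative
    {E : Type*} [NormedAddCommGroup E] [NormedSpace ℝ E] [CompleteSpace E]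
    (L : E →L[ℝ] E) (c : E) (A : E → E) (hA : ∀ x : E, A x = L x + c)
    (T : ℝ → E →L[ℝ] E)
    (hT : ∀ (x : E) (s : ℝ), HasDerivAt (fun σ : ℝ => T σ x) (L (T s x)) s)
    (hTL : ∀ (s : ℝ) (x : E), T s (L x) = L (T s x))
    (Φ : ℝ → E → E) (γ : ℝ → E)
    (hΦ : ∀ (s : ℝ) (x : E), Φ s x = T s x + γ s)
    (hflow : ∀ (s : ℝ) (x : E), HasDerivAt (fun σ : ℝ => Φ σ x) (A (Φ s x)) s)
    (B : E → E) (hB : ContDiff ℝ 2 B) (v₀ : E) (τ : ℝ)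
    (f : ℝ → E) (hf : ∀ s : ℝ, f s = T (τ - s) (B (Φ s v₀)))
    (comm : E → E) (hcomm : ∀ u : E, comm u = fderiv ℝ B u (A u) - L (B u)) :
    (∀ s : ℝ, DifferentiableAt ℝ f s) ∧
      ∀ s : ℝ, HasDerivAt (deriv f)
        (T (τ - s) (fderiv ℝ comm (Φ s v₀) (A (Φ s v₀)) - L (comm (Φ s v₀)))) s :=
  strang_splitting_quadrature_second_derivative_general L c A hA T hT hTL Φ hflow B hB v₀ τ f hf
    comm hcomm
end

section
/- Let d ≥ 1. Let u, w : ℝ^d → ℂ be continuously differentiable and bounded, with ∇u, ∇w ∈ L²(ℝ^d), 1−|u|² ∈ L²(ℝ^d), 1−|w|² ∈ L²(ℝ^d), u − w ∈ L²(ℝ^d) and ∇u − ∇w ∈ L²(ℝ^d), and let V ∈ L²(ℝ^d; ℝ). Then the Ginzburg–Landau energies E(u) and E(w) are finite and |E(u) − E(w)| ≤ (‖∇u‖_{L²} + ‖∇w‖_{L²})·‖∇u − ∇w‖_{L²} + (1/2)·(‖u‖_{L^∞} + ‖w‖_{L^∞})·(‖1−|u|²‖_{L²} + ‖1−|w|²‖_{L²})·‖u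 − w‖_{L²} + ‖V‖_{L²}·(‖u‖_{L^∞} + ‖w‖_{L^∞})·‖u − w‖_{L²}. -/
open MeasureTheory

/-- Partial derivative in the `k`-th coordinate direction. -/
noncomputable def pd {d : ℕ} {F : Type*} [NormedAddCommGroup F] [NormedSpace ℝ F]
    (f : EuclideanSpace ℝ (Fin d) → F) (k : Fin d) (x : EuclideanSpace ℝ (Fin d)) : F :=
  fderiv ℝ f x (EuclideanSpace.single k 1)

/-- `L²` norm. -/
noncomputable def L2N {d : ℕ} {F : Type*} [NormedAddCommGroup F]
    (f : EuclideanSpace ℝ (Fin d) → F) : ℝ :=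
  (eLpNorm f 2 volume).toReal

/-- `L^∞` (essential supremum) norm. -/
noncomputable def LinfN {d : ℕ} {F : Type*} [NormedAddCommGroup F]
    (f : EuclideanSpace ℝ (Fin d) → F) : ℝ :=
  (eLpNorm f ⊤ volume).toReal

/-- `L²` norm of the gradient: `(∫ Σ_k |∂_k u|²)^{1/2}`. -/
noncomputable def gradL2 {d : ℕ} (u : EuclideanSpace ℝ (Fin d) → ℂ) : ℝ :=
  Real.sqrt (∫ x, ∑ k : Fin d, ‖pd u k x‖ ^ 2)

/-- The Ginzburg–Landau energy
`E(u) = ∫ |∇u|² + (1/2) ∫ (1−|u|²)² + ∫ V (1−|u|²)`. -/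
noncomputable def GLenergy {d : ℕ} (u : EuclideanSpace ℝ (Fin d) → ℂ)
    (V : EuclideanSpace ℝ (Fin d) → ℝ) : ℝ :=
  (∫ x, ∑ k : Fin d, ‖pd u k x‖ ^ 2)
    + (1 / 2) * (∫ x, (1 - ‖u x‖ ^ 2) ^ 2)
    + ∫ x, V x * (1 - ‖u x‖ ^ 2)

/-! Write `E(u) - E(w)` term by term. The gradient term is `‖∇u‖₂² - ‖∇w‖₂²`, a difference of
squares whose second factor is controlled by the reverse triangle inequality in `L²`. For the
two potential terms the identities `(1 - a²)² - (1 - b²)² = ((1 - a²) + (1 - b²)) (b² - a²)` and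
`V (1 - a²) - V (1 - b²) = V (b² - a²)` reduce both to `∫ φ (|u|² - |w|²)` with `φ ∈ L²`;
pointwise `||u|² - |w|²| ≤ (‖u‖_∞ + ‖w‖_∞) |u - w|`, and Cauchy–Schwarz finishes. -/

open scoped ENNReal

section L2

variable {X E F : Type*} [MeasurableSpace X] {μ : Measure X}
  [NormedAddCommGroup E] [NormedAddCommGroup F]

lemma abs_sq_sub_sq_le_of_abs_sub_le {a b c : ℝ} (ha : 0 ≤ a) (hb : 0 ≤ b) (h : |a - b| ≤ c) :
    |a ^ 2 - b ^ 2| ≤ (a + b) * c := by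
  rw [sq_sub_sq, abs_mul, abs_of_nonneg (add_nonneg ha hb)]
  exact mul_le_mul_of_nonneg_left h (add_nonneg ha hb)

lemma abs_norm_sq_sub_norm_sq_le (a b : E) : |‖a‖ ^ 2 - ‖b‖ ^ 2| ≤ (‖a‖ + ‖b‖) * ‖a - b‖ :=
  abs_sq_sub_sq_le_of_abs_sub_le (norm_nonneg a) (norm_nonneg b) (abs_norm_sub_norm_le a b)

lemma sqrt_integral_norm_sq_eq_toReal_eLpNorm {f : X → E} (hf : MemLp f 2 μ) :
    √(∫ x, ‖f x‖ ^ 2 ∂μ) = (eLpNorm f 2 μ).toReal := by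
  rw [hf.eLpNorm_eq_integral_rpow_norm two_ne_zero ENNReal.ofNat_ne_top,
    ENNReal.toReal_ofReal (by positivity), Real.sqrt_eq_rpow]
  norm_num

lemma abs_toReal_eLpNorm_sub_toReal_eLpNorm_le {p : ℝ≥0∞} [Fact (1 ≤ p)] {f g : X → E}
    (hf : MemLp f p μ) (hg : MemLp g p μ) :
    |(eLpNorm f p μ).toReal - (eLpNorm g p μ).toReal| ≤ (eLpNorm (f - g) p μ).toReal := by
  rw [← Lp.norm_toLp f hf, ← Lp.norm_toLp g hg, ← Lp.norm_toLp (f - g) (hf.sub hg),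
    hf.toLp_sub hg]
  exact abs_norm_sub_norm_le _ _

lemma toReal_eLpNorm_add_le {p : ℝ≥0∞} [Fact (1 ≤ p)] {f g : X → E} (hf : MemLp f p μ)
    (hg : MemLp g p μ) :
    (eLpNorm (f + g) p μ).toReal ≤ (eLpNorm f p μ).toReal + (eLpNorm g p μ).toReal := by
  rw [← Lp.norm_toLp f hf, ← Lp.norm_toLp g hg, ← Lp.norm_toLp (f + g) (hf.add hg),
    hf.toLp_add hg]
  exact norm_add_le _ _

lemma abs_sq_toReal_eLpNorm_sub_sq_le {f g : X → E} (hf : MemLp f 2 μ) (hg : MemLp g 2 μ) :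
    |(eLpNorm f 2 μ).toReal ^ 2 - (eLpNorm g 2 μ).toReal ^ 2| ≤
      ((eLpNorm f 2 μ).toReal + (eLpNorm g 2 μ).toReal) * (eLpNorm (f - g) 2 μ).toReal :=
  abs_sq_sub_sq_le_of_abs_sub_le ENNReal.toReal_nonneg ENNReal.toReal_nonneg
    (abs_toReal_eLpNorm_sub_toReal_eLpNorm_le hf hg)

lemma integral_norm_mul_norm_le {f : X → E} {g : X → F} (hf : MemLp f 2 μ) (hg : MemLp g 2 μ) :
    ∫ x, ‖f x‖ * ‖g x‖ ∂μ ≤ (eLpNorm f 2 μ).toReal * (eLpNorm g 2 μ).toReal := by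
  have h2 : ENNReal.ofReal 2 = 2 := by norm_num
  have := integral_mul_norm_le_Lp_mul_Lq Real.HolderConjugate.two_two (h2 ▸ hf.norm)
    (h2 ▸ hg.norm)
  rw [← sqrt_integral_norm_sq_eq_toReal_eLpNorm hf, ← sqrt_integral_norm_sq_eq_toReal_eLpNorm hg,
    Real.sqrt_eq_rpow, Real.sqrt_eq_rpow]
  simpa only [Real.rpow_two, norm_norm] using this

lemma ae_norm_le_toReal_eLpNorm_top {f : X → E} {C : ℝ} (hC : ∀ᵐ x ∂μ, ‖f x‖ ≤ C) :
    ∀ᵐ x ∂μ, ‖f x‖ ≤ (eLpNorm f ∞ μ).toReal := by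
  rw [eLpNorm_exponent_top]
  have hfin : eLpNormEssSup f μ ≠ ∞ :=
    ne_top_of_le_ne_top ENNReal.ofReal_ne_top (eLpNormEssSup_le_of_ae_bound hC)
  filter_upwards [ae_le_eLpNormEssSup (f := f) (μ := μ)] with x hx
  simpa using ENNReal.toReal_mono hfin hx

end L2

section Potential

variable {X E : Type*} [MeasurableSpace X] {μ : Measure X} [NormedAddCommGroup E]
  {u w : X → E} {M : ℝ}

lemma abs_integral_mul_norm_sq_sub_norm_sq_le {φ : X → ℝ} (hφ : MemLp φ 2 μ)
    (huw : MemLp (fun x => u x - w x) 2 μ) (hM : 0 ≤ M)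
    (hbound : ∀ᵐ x ∂μ, ‖u x‖ + ‖w x‖ ≤ M) :
    |∫ x, φ x * (‖u x‖ ^ 2 - ‖w x‖ ^ 2) ∂μ| ≤
      M * (eLpNorm φ 2 μ).toReal * (eLpNorm (fun x => u x - w x) 2 μ).toReal := by
  have hint : Integrable (fun x => M * (‖φ x‖ * ‖u x - w x‖)) μ :=
    (hφ.norm.integrable_mul huw.norm).const_mul M
  have hpointwise : ∀ᵐ x ∂μ, ‖φ x * (‖u x‖ ^ 2 - ‖w x‖ ^ 2)‖ ≤ M * (‖φ x‖ * ‖u x - w x‖) := by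
    filter_upwards [hbound] with x hx
    rw [norm_mul, Real.norm_eq_abs (_ - _), mul_left_comm]
    gcongr
    exact (abs_norm_sq_sub_norm_sq_le _ _).trans (by gcongr)
  calc |∫ x, φ x * (‖u x‖ ^ 2 - ‖w x‖ ^ 2) ∂μ|
      ≤ ∫ x, M * (‖φ x‖ * ‖u x - w x‖) ∂μ := norm_integral_le_of_norm_le hint hpointwise
    _ = M * ∫ x, ‖φ x‖ * ‖u x - w x‖ ∂μ := integral_const_mul M _
    _ ≤ M * ((eLpNorm φ 2 μ).toReal * (eLpNorm (fun x => u x - w x) 2 μ).toReal) := by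
        gcongr
        exact integral_norm_mul_norm_le hφ huw
    _ = _ := (mul_assoc ..).symm

lemma abs_integral_sq_one_sub_norm_sq_sub_le (hu : MemLp (fun x => 1 - ‖u x‖ ^ 2) 2 μ)
    (hw : MemLp (fun x => 1 - ‖w x‖ ^ 2) 2 μ) (huw : MemLp (fun x => u x - w x) 2 μ)
    (hM : 0 ≤ M) (hbound : ∀ᵐ x ∂μ, ‖u x‖ + ‖w x‖ ≤ M) :
    |∫ x, (1 - ‖u x‖ ^ 2) ^ 2 ∂μ - ∫ x, (1 - ‖w x‖ ^ 2) ^ 2 ∂μ| ≤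
      M * ((eLpNorm (fun x => 1 - ‖u x‖ ^ 2) 2 μ).toReal
        + (eLpNorm (fun x => 1 - ‖w x‖ ^ 2) 2 μ).toReal)
        * (eLpNorm (fun x => u x - w x) 2 μ).toReal := by
  have hdiff : ∫ x, (1 - ‖u x‖ ^ 2) ^ 2 ∂μ - ∫ x, (1 - ‖w x‖ ^ 2) ^ 2 ∂μ =
      -∫ x, (1 - ‖u x‖ ^ 2 + (1 - ‖w x‖ ^ 2)) * (‖u x‖ ^ 2 - ‖w x‖ ^ 2) ∂μ := by
    rw [← integral_sub hu.integrable_sq hw.integrable_sq, ← integral_neg]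
    congr 1 with x
    ring
  rw [hdiff, abs_neg]
  refine (abs_integral_mul_norm_sq_sub_norm_sq_le (hu.add hw) huw hM hbound).trans ?_
  gcongr
  exact toReal_eLpNorm_add_le hu hw

lemma abs_integral_mul_one_sub_norm_sq_sub_le {V : X → ℝ} (hV : MemLp V 2 μ)
    (hu : MemLp (fun x => 1 - ‖u x‖ ^ 2) 2 μ) (hw : MemLp (fun x => 1 - ‖w x‖ ^ 2) 2 μ)
    (huw : MemLp (fun x => u x - w x) 2 μ) (hM : 0 ≤ M)
    (hbound : ∀ᵐ x ∂μ, ‖u x‖ + ‖w x‖ ≤ M) :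
    |∫ x, V x * (1 - ‖u x‖ ^ 2) ∂μ - ∫ x, V x * (1 - ‖w x‖ ^ 2) ∂μ| ≤
      M * (eLpNorm V 2 μ).toReal * (eLpNorm (fun x => u x - w x) 2 μ).toReal := by
  have hdiff : ∫ x, V x * (1 - ‖u x‖ ^ 2) ∂μ - ∫ x, V x * (1 - ‖w x‖ ^ 2) ∂μ =
      -∫ x, V x * (‖u x‖ ^ 2 - ‖w x‖ ^ 2) ∂μ := by
    have hVu : Integrable (fun x => V x * (1 - ‖u x‖ ^ 2)) μ := hV.integrable_mul hu
    have hVw : Integrable (fun x => V x * (1 - ‖w x‖ ^ 2)) μ := hV.integrable_mul hw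
    rw [← integral_sub hVu hVw, ← integral_neg]
    congr 1 with x
    ring
  rw [hdiff, abs_neg]
  exact abs_integral_mul_norm_sq_sub_norm_sq_le hV huw hM hbound

end Potential

section Gradient

variable {d : ℕ} {F : Type*} [NormedAddCommGroup F] [NormedSpace ℝ F]

variable (d F) in
noncomputable def partialDerivs :
    (EuclideanSpace ℝ (Fin d) →L[ℝ] F) →L[ℝ] PiLp 2 (fun _ : Fin d => F) :=
  (PiLp.continuousLinearEquiv 2 ℝ (fun _ : Fin d => F)).symm.toContinuousLinearMap ∘L
    ContinuousLinearMap.pi fun k => ContinuousLinearMap.apply ℝ F (EuclideanSpace.single k 1)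

lemma norm_sq_partialDerivs (L : EuclideanSpace ℝ (Fin d) →L[ℝ] F) :
    ‖partialDerivs d F L‖ ^ 2 = ∑ k, ‖L (EuclideanSpace.single k 1)‖ ^ 2 :=
  PiLp.norm_sq_eq_of_L2 _ _

lemma sum_norm_sq_pd (f : EuclideanSpace ℝ (Fin d) → F) (x : EuclideanSpace ℝ (Fin d)) :
    ∑ k, ‖pd f k x‖ ^ 2 = ‖partialDerivs d F (fderiv ℝ f x)‖ ^ 2 :=
  (norm_sq_partialDerivs _).symm

lemma sum_norm_sq_pd_sub_pd (f g : EuclideanSpace ℝ (Fin d) → F) (x : EuclideanSpace ℝ (Fin d)) :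
    ∑ k, ‖pd f k x - pd g k x‖ ^ 2 = ‖partialDerivs d F (fderiv ℝ f x - fderiv ℝ g x)‖ ^ 2 := by
  rw [norm_sq_partialDerivs]
  rfl

lemma integrable_sum_norm_sq_pd {μ : Measure (EuclideanSpace ℝ (Fin d))}
    {f : EuclideanSpace ℝ (Fin d) → F} (hf : MemLp (fderiv ℝ f) 2 μ) :
    Integrable (fun x => ∑ k, ‖pd f k x‖ ^ 2) μ := by
  simp_rw [sum_norm_sq_pd]
  exact (hf.continuousLinearMap_comp (partialDerivs d F)).norm.integrable_sq

end Gradient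

section GradL2

lemma integral_sum_norm_sq_pd_eq_sq_gradL2 {d : ℕ} (u : EuclideanSpace ℝ (Fin d) → ℂ) :
    ∫ x, ∑ k, ‖pd u k x‖ ^ 2 = gradL2 u ^ 2 :=
  (Real.sq_sqrt (integral_nonneg fun _ => by positivity)).symm

variable {d : ℕ} {u w : EuclideanSpace ℝ (Fin d) → ℂ}

lemma gradL2_eq_toReal_eLpNorm (hu : MemLp (fderiv ℝ u) 2 volume) :
    gradL2 u = (eLpNorm (fun x => partialDerivs d ℂ (fderiv ℝ u x)) 2 volume).toReal := by
  simp_rw [gradL2, sum_norm_sq_pd]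
  exact sqrt_integral_norm_sq_eq_toReal_eLpNorm (hu.continuousLinearMap_comp (partialDerivs d ℂ))

lemma abs_integral_sum_norm_sq_pd_sub_le (hu : MemLp (fderiv ℝ u) 2 volume)
    (hw : MemLp (fderiv ℝ w) 2 volume)
    (huw : MemLp (fun x => fderiv ℝ u x - fderiv ℝ w x) 2 volume) :
    |(∫ x, ∑ k, ‖pd u k x‖ ^ 2) - ∫ x, ∑ k, ‖pd w k x‖ ^ 2| ≤
      (gradL2 u + gradL2 w) * √(∫ x, ∑ k, ‖pd u k x - pd w k x‖ ^ 2) := by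
  have hdiff : (fun x => partialDerivs d ℂ (fderiv ℝ u x - fderiv ℝ w x)) =
      (fun x => partialDerivs d ℂ (fderiv ℝ u x)) - fun x => partialDerivs d ℂ (fderiv ℝ w x) :=
    funext fun x => map_sub _ _ _
  rw [integral_sum_norm_sq_pd_eq_sq_gradL2 u, integral_sum_norm_sq_pd_eq_sq_gradL2 w]
  simp_rw [sum_norm_sq_pd_sub_pd,
    sqrt_integral_norm_sq_eq_toReal_eLpNorm (huw.continuousLinearMap_comp (partialDerivs d ℂ)),
    hdiff, gradL2_eq_toReal_eLpNorm hu, gradL2_eq_toReal_eLpNorm hw]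
  exact abs_sq_toReal_eLpNorm_sub_sq_le (hu.continuousLinearMap_comp (partialDerivs d ℂ))
    (hw.continuousLinearMap_comp (partialDerivs d ℂ))

end GradL2

theorem energy_difference_estimate_general (d : ℕ)
    (u w : EuclideanSpace ℝ (Fin d) → ℂ) (V : EuclideanSpace ℝ (Fin d) → ℝ)
    (hub : ∃ M : ℝ, ∀ x, ‖u x‖ ≤ M) (hwb : ∃ M : ℝ, ∀ x, ‖w x‖ ≤ M)
    (hgu : MemLp (fderiv ℝ u) 2 volume) (hgw : MemLp (fderiv ℝ w) 2 volume)
    (hmu : MemLp (fun x => 1 - ‖u x‖ ^ 2) 2 volume)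
    (hmw : MemLp (fun x => 1 - ‖w x‖ ^ 2) 2 volume)
    (huw : MemLp (fun x => u x - w x) 2 volume)
    (hguw : MemLp (fun x => fderiv ℝ u x - fderiv ℝ w x) 2 volume)
    (hV : MemLp V 2 volume) :
    (Integrable (fun x => ∑ k : Fin d, ‖pd u k x‖ ^ 2) volume ∧
      Integrable (fun x => (1 - ‖u x‖ ^ 2) ^ 2) volume ∧
      Integrable (fun x => V x * (1 - ‖u x‖ ^ 2)) volume ∧
      Integrable (fun x => ∑ k : Fin d, ‖pd w k x‖ ^ 2) volume ∧
      Integrable (fun x => (1 - ‖w x‖ ^ 2) ^ 2) volume ∧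
      Integrable (fun x => V x * (1 - ‖w x‖ ^ 2)) volume) ∧
    |GLenergy u V - GLenergy w V| ≤
      (gradL2 u + gradL2 w) *
          Real.sqrt (∫ x, ∑ k : Fin d, ‖pd u k x - pd w k x‖ ^ 2)
        + (1 / 2) * (LinfN u + LinfN w) *
            (L2N (fun x => 1 - ‖u x‖ ^ 2)
              + L2N (fun x => 1 - ‖w x‖ ^ 2)) *
            L2N (fun x => u x - w x)
        + L2N V * (LinfN u + LinfN w) * L2N (fun x => u x - w x) := by
  refine ⟨⟨integrable_sum_norm_sq_pd hgu, hmu.integrable_sq, hV.integrable_mul hmu,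
    integrable_sum_norm_sq_pd hgw, hmw.integrable_sq, hV.integrable_mul hmw⟩, ?_⟩
  obtain ⟨Mu, hMu⟩ := hub
  obtain ⟨Mw, hMw⟩ := hwb
  have hbound : ∀ᵐ x, ‖u x‖ + ‖w x‖ ≤ LinfN u + LinfN w := by
    filter_upwards [ae_norm_le_toReal_eLpNorm_top (ae_of_all _ hMu),
      ae_norm_le_toReal_eLpNorm_top (ae_of_all _ hMw)] with x hux hwx
    exact add_le_add hux hwx
  have hM : 0 ≤ LinfN u + LinfN w := add_nonneg ENNReal.toReal_nonneg ENNReal.toReal_nonneg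
  have hgrad := abs_integral_sum_norm_sq_pd_sub_le hgu hgw hguw
  have hpot := abs_integral_sq_one_sub_norm_sq_sub_le hmu hmw huw hM hbound
  have hext := abs_integral_mul_one_sub_norm_sq_sub_le hV hmu hmw huw hM hbound
  rw [abs_le] at hgrad hpot hext ⊢
  unfold GLenergy L2N
  constructor <;> linarith

/-- Lipschitz-type estimate for the Ginzburg–Landau energy: the energies of `u`
and `w` are finite, and `|E(u) − E(w)|` is bounded by the `L²` and gradient-`L²`
distances between `u` and `w`. -/
theorem energy_difference_estimate (d : ℕ) (hd : 1 ≤ d)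
    (u w : EuclideanSpace ℝ (Fin d) → ℂ) (V : EuclideanSpace ℝ (Fin d) → ℝ)
    (hu : ContDiff ℝ 1 u) (hw : ContDiff ℝ 1 w)
    (hub : ∃ M : ℝ, ∀ x, ‖u x‖ ≤ M) (hwb : ∃ M : ℝ, ∀ x, ‖w x‖ ≤ M)
    (hgu : MemLp (fderiv ℝ u) 2 volume) (hgw : MemLp (fderiv ℝ w) 2 volume)
    (hmu : MemLp (fun x => 1 - ‖u x‖ ^ 2) 2 volume)
    (hmw : MemLp (fun x => 1 - ‖w x‖ ^ 2) 2 volume)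
    (huw : MemLp (fun x => u x - w x) 2 volume)
    (hguw : MemLp (fun x => fderiv ℝ u x - fderiv ℝ w x) 2 volume)
    (hV : MemLp V 2 volume) :
    (Integrable (fun x => ∑ k : Fin d, ‖pd u k x‖ ^ 2) volume ∧
      Integrable (fun x => (1 - ‖u x‖ ^ 2) ^ 2) volume ∧
      Integrable (fun x => V x * (1 - ‖u x‖ ^ 2)) volume ∧
      Integrable (fun x => ∑ k : Fin d, ‖pd w k x‖ ^ 2) volume ∧
      Integrable (fun x => (1 - ‖w x‖ ^ 2) ^ 2) volume ∧
      Integrable (fun x => V x * (1 - ‖w x‖ ^ 2)) volume) ∧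
    |GLenergy u V - GLenergy w V| ≤
      (gradL2 u + gradL2 w) *
          Real.sqrt (∫ x, ∑ k : Fin d, ‖pd u k x - pd w k x‖ ^ 2)
        + (1 / 2) * (LinfN u + LinfN w) *
            (L2N (fun x => 1 - ‖u x‖ ^ 2)
              + L2N (fun x => 1 - ‖w x‖ ^ 2)) *
            L2N (fun x => u x - w x)
        + L2N V * (LinfN u + LinfN w) * L2N (fun x => u x - w x) :=
  energy_difference_estimate_general d u w V hub hwb hgu hgw hmu hmw huw hguw hV
end
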